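/- arXiv:1404.6000 — 3 statements merged into one kernel-verified Lean document; each statement's English description precedes it below -/
import Mathlib

section
/- Let x be the column of X indexed by an inlier node i in community k, where X is the block matrix with diagonal blocks J_{l_1},...,J_{l_r} (all-ones matrices) and arbitrary entries in [0,1] in the outlier rows/columns; let y = x/‖x‖₂. If i, j are inliers in the same community k, then ⟨y_i, y_j⟩ ≥ l_k/(l_k + m), hence ‖y_i - y_j‖² ≤ 2m/l_k; if i, j are inliers in different communities, then ⟨y_i, y_j⟩ ≤ m/n_min, hence ‖y_i - y_j‖² ≥ 2 - 2m/n_min. -/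
/-!
The Gram matrix of the columns splits into an inlier part and an outlier part: for inliers
`i, j` the inlier coordinates contribute `l_k` if both lie in community `k` and `0` otherwise,
while the `m` outlier coordinates, being products of numbers in `[0, 1]`, contribute something
in `[0, m]`. Hence `‖x_i‖²` lies between `l_{φ i}` and `l_{φ i} + m`, and the bounds on
`⟪y_i, y_j⟫ = ⟪x_i, x_j⟫ / (‖x_i‖ ‖x_j‖)` follow; the distance bounds come from
`‖y_i - y_j‖² = 2 - 2 ⟪y_i, y_j⟫` for unit vectors.
-/

open scoped RealInnerProductSpace

open Finset

section Normalized

variable {E : Type*} [NormedAddCommGroup E] [InnerProductSpace ℝ E]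

theorem real_inner_inv_norm_smul_inv_norm_smul (u v : E) :
    ⟪‖u‖⁻¹ • u, ‖v‖⁻¹ • v⟫ = ⟪u, v⟫ / (‖u‖ * ‖v‖) := by
  rw [real_inner_smul_left, real_inner_smul_right, div_eq_inv_mul, mul_inv]
  ring

theorem norm_inv_norm_smul_sub_sq {u v : E} (hu : u ≠ 0) (hv : v ≠ 0) :
    ‖‖u‖⁻¹ • u - ‖v‖⁻¹ • v‖ ^ 2 = 2 - 2 * ⟪‖u‖⁻¹ • u, ‖v‖⁻¹ • v⟫ := by
  have hu1 : ‖‖u‖⁻¹ • u‖ = 1 := norm_smul_inv_norm (𝕜 := ℝ) hu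
  have hv1 : ‖‖v‖⁻¹ • v‖ = 1 := norm_smul_inv_norm (𝕜 := ℝ) hv
  rw [norm_sub_sq_real, hu1, hv1]
  ring

theorem le_inner_normalized_and_norm_sub_sq_le {u v : E} {L M : ℝ} (hL : 0 < L) (hM : 0 ≤ M)
    (huv : L ≤ ⟪u, v⟫) (hu : ‖u‖ ^ 2 ≤ L + M) (hv : ‖v‖ ^ 2 ≤ L + M) :
    L / (L + M) ≤ ⟪‖u‖⁻¹ • u, ‖v‖⁻¹ • v⟫ ∧ ‖‖u‖⁻¹ • u - ‖v‖⁻¹ • v‖ ^ 2 ≤ 2 * M / L := by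
  have hnorm_pos : 0 < ‖u‖ * ‖v‖ := hL.trans_le (huv.trans (real_inner_le_norm u v))
  have hu0 : u ≠ 0 := norm_pos_iff.mp (pos_of_mul_pos_left hnorm_pos (norm_nonneg v))
  have hv0 : v ≠ 0 := norm_pos_iff.mp (pos_of_mul_pos_right hnorm_pos (norm_nonneg u))
  have hnorm_le : ‖u‖ * ‖v‖ ≤ L + M := by nlinarith [sq_nonneg (‖u‖ - ‖v‖)]
  have hinner : L / (L + M) ≤ ⟪‖u‖⁻¹ • u, ‖v‖⁻¹ • v⟫ := by
    rw [real_inner_inv_norm_smul_inv_norm_smul]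
    exact div_le_div₀ (by linarith) huv hnorm_pos hnorm_le
  refine ⟨hinner, ?_⟩
  calc ‖‖u‖⁻¹ • u - ‖v‖⁻¹ • v‖ ^ 2 ≤ 2 - 2 * (L / (L + M)) := by
        rw [norm_inv_norm_smul_sub_sq hu0 hv0]; linarith
    _ = 2 * M / (L + M) := by field_simp; ring
    _ ≤ 2 * M / L := div_le_div_of_nonneg_left (by positivity) hL (by linarith)

theorem inner_normalized_le_and_le_norm_sub_sq {u v : E} {M N : ℝ} (hN : 0 < N) (hM : 0 ≤ M)
    (huv : ⟪u, v⟫ ≤ M) (hu : N ≤ ‖u‖ ^ 2) (hv : N ≤ ‖v‖ ^ 2) :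
    ⟪‖u‖⁻¹ • u, ‖v‖⁻¹ • v⟫ ≤ M / N ∧ 2 - 2 * M / N ≤ ‖‖u‖⁻¹ • u - ‖v‖⁻¹ • v‖ ^ 2 := by
  have hu0 : u ≠ 0 := by rintro rfl; simp at hu; linarith
  have hv0 : v ≠ 0 := by rintro rfl; simp at hv; linarith
  have hnorm_ge : N ≤ ‖u‖ * ‖v‖ := by
    refine (pow_le_pow_iff_left₀ hN.le (by positivity) two_ne_zero).mp ?_
    calc N ^ 2 = N * N := sq N
      _ ≤ ‖u‖ ^ 2 * ‖v‖ ^ 2 := mul_le_mul hu hv hN.le (by positivity)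
      _ = (‖u‖ * ‖v‖) ^ 2 := (mul_pow _ _ _).symm
  have hinner : ⟪‖u‖⁻¹ • u, ‖v‖⁻¹ • v⟫ ≤ M / N := by
    rw [real_inner_inv_norm_smul_inv_norm_smul]
    exact div_le_div₀ hM huv hN hnorm_ge
  refine ⟨hinner, ?_⟩
  rw [norm_inv_norm_smul_sub_sq hu0 hv0, mul_div_assoc]
  linarith

end Normalized

section Communities

variable {ι κ C : Type*} [Fintype ι] [Fintype κ] [DecidableEq C]

theorem sum_mul_mem_Icc_card {f g : κ → ℝ} (hf : ∀ b, 0 ≤ f b ∧ f b ≤ 1)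
    (hg : ∀ b, 0 ≤ g b ∧ g b ≤ 1) : ∑ b, f b * g b ∈ Set.Icc 0 (Fintype.card κ : ℝ) := by
  refine ⟨sum_nonneg fun b _ => mul_nonneg (hf b).1 (hg b).1, ?_⟩
  calc ∑ b, f b * g b ≤ ∑ _b : κ, (1 : ℝ) :=
        sum_le_sum fun b _ => mul_le_one₀ (hf b).2 (hg b).1 (hg b).2
    _ = Fintype.card κ := by simp

theorem sum_ite_eq_mul_ite_eq (φ : ι → C) (i j : ι) :
    ∑ a, (if φ a = φ i then (1 : ℝ) else 0) * (if φ a = φ j then 1 else 0) =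
      if φ i = φ j then (#{a | φ a = φ i} : ℝ) else 0 := by
  split_ifs with hij
  · simp only [← hij, ite_zero_mul_ite_zero, and_self, mul_one, sum_boole]
  · refine sum_eq_zero fun a _ => ?_
    by_cases ha : φ a = φ i
    · simp [ha, hij]
    · simp [ha]

theorem exists_inner_col_eq (X : Matrix (ι ⊕ κ) (ι ⊕ κ) ℝ) (φ : ι → C) (l : C → ℕ)
    (h01 : ∀ a b, 0 ≤ X a b ∧ X a b ≤ 1)
    (hin : ∀ i j, X (Sum.inl i) (Sum.inl j) = if φ i = φ j then 1 else 0)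
    (hl : ∀ k, l k = #{i | φ i = k})
    (x : ι → EuclideanSpace ℝ (ι ⊕ κ)) (hx : ∀ i a, x i a = X a (Sum.inl i)) (i j : ι) :
    ∃ p ∈ Set.Icc 0 (Fintype.card κ : ℝ),
      ⟪x i, x j⟫ = (if φ i = φ j then (l (φ i) : ℝ) else 0) + p := by
  refine ⟨_, sum_mul_mem_Icc_card (fun b => h01 (Sum.inr b) (Sum.inl i))
    (fun b => h01 (Sum.inr b) (Sum.inl j)), ?_⟩
  rw [PiLp.inner_apply, Fintype.sum_sum_type, hl, ← sum_ite_eq_mul_ite_eq]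
  simp only [RCLike.inner_apply, conj_trivial, hx, hin, mul_comm]

end Communities

theorem stmt2_general {n m r : ℕ} (X : Matrix (Fin n ⊕ Fin m) (Fin n ⊕ Fin m) ℝ)
    (φ : Fin n → Fin r) (l : Fin r → ℕ) (nmin : ℕ)
    (h01 : ∀ a b, 0 ≤ X a b ∧ X a b ≤ 1)
    (hin : ∀ i j : Fin n, X (Sum.inl i) (Sum.inl j) = if φ i = φ j then 1 else 0)
    (hl : ∀ k, l k = (Finset.univ.filter fun i => φ i = k).card)
    (hnmin : ∀ k, nmin ≤ l k) (hnminpos : 0 < nmin)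
    (x : Fin n → EuclideanSpace ℝ (Fin n ⊕ Fin m))
    (hx : ∀ i a, x i a = X a (Sum.inl i))
    (y : Fin n → EuclideanSpace ℝ (Fin n ⊕ Fin m))
    (hy : ∀ i, y i = ‖x i‖⁻¹ • x i) :
    (∀ i j : Fin n, φ i = φ j →
      ((l (φ i) : ℝ) / ((l (φ i) : ℝ) + m) ≤ ⟪y i, y j⟫ ∧
        ‖y i - y j‖ ^ 2 ≤ 2 * (m : ℝ) / (l (φ i) : ℝ))) ∧
    (∀ i j : Fin n, φ i ≠ φ j →
      (⟪y i, y j⟫ ≤ (m : ℝ) / (nmin : ℝ) ∧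
        2 - 2 * (m : ℝ) / (nmin : ℝ) ≤ ‖y i - y j‖ ^ 2)) := by
  have hgram := exists_inner_col_eq X φ l h01 hin hl x hx
  simp only [Fintype.card_fin] at hgram
  have hnorm_sq : ∀ i, ∃ p ∈ Set.Icc (0 : ℝ) m, ‖x i‖ ^ 2 = l (φ i) + p := fun i => by
    simpa [real_inner_self_eq_norm_sq] using hgram i i
  have hl_pos : ∀ i, (0 : ℝ) < l (φ i) := fun i => by
    rw [hl]; exact_mod_cast card_pos.mpr ⟨i, by simp⟩
  simp only [hy]
  refine ⟨fun i j hij => ?_, fun i j hij => ?_⟩ <;>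
    obtain ⟨p, hp, hxij⟩ := hgram i j <;>
    obtain ⟨pi, hpi, hxi⟩ := hnorm_sq i <;>
    obtain ⟨pj, hpj, hxj⟩ := hnorm_sq j
  · rw [if_pos hij] at hxij
    rw [← hij] at hxj
    exact le_inner_normalized_and_norm_sub_sq_le (hl_pos i) m.cast_nonneg
      (by linarith [hp.1]) (by linarith [hpi.2]) (by linarith [hpj.2])
  · rw [if_neg hij] at hxij
    have hnmin' : ∀ k, (nmin : ℝ) ≤ l k := fun k => by exact_mod_cast hnmin k
    exact inner_normalized_le_and_le_norm_sub_sq (by exact_mod_cast hnminpos) m.cast_nonneg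
      (by linarith [hp.2]) (by linarith [hpi.1, hnmin' (φ i)]) (by linarith [hpj.1, hnmin' (φ j)])

theorem stmt2 {n m r : ℕ} (X : Matrix (Fin n ⊕ Fin m) (Fin n ⊕ Fin m) ℝ)
    (φ : Fin n → Fin r) (l : Fin r → ℕ) (nmin : ℕ)
    (hsym : X.IsSymm)
    (h01 : ∀ a b, 0 ≤ X a b ∧ X a b ≤ 1)
    (hin : ∀ i j : Fin n, X (Sum.inl i) (Sum.inl j) = if φ i = φ j then 1 else 0)
    (hl : ∀ k, l k = (Finset.univ.filter fun i => φ i = k).card)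
    (hnmin : ∀ k, nmin ≤ l k) (hnminpos : 0 < nmin)
    (x : Fin n → EuclideanSpace ℝ (Fin n ⊕ Fin m))
    (hx : ∀ i a, x i a = X a (Sum.inl i))
    (y : Fin n → EuclideanSpace ℝ (Fin n ⊕ Fin m))
    (hy : ∀ i, y i = ‖x i‖⁻¹ • x i) :
    (∀ i j : Fin n, φ i = φ j →
      ((l (φ i) : ℝ) / ((l (φ i) : ℝ) + m) ≤ ⟪y i, y j⟫ ∧
        ‖y i - y j‖ ^ 2 ≤ 2 * (m : ℝ) / (l (φ i) : ℝ))) ∧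
    (∀ i j : Fin n, φ i ≠ φ j →
      (⟪y i, y j⟫ ≤ (m : ℝ) / (nmin : ℝ) ∧
        2 - 2 * (m : ℝ) / (nmin : ℝ) ≤ ‖y i - y j‖ ^ 2)) :=
  stmt2_general X φ l nmin h01 hin hl hnmin hnminpos x hx y hy
end

section
/- Under the normalized-column setup (communities of sizes l_1,...,l_r among n inliers, m outliers), the optimal k-means objective with k = r clusters applied to the normalized columns y_1,...,y_N satisfies min over partitions S_1,...,S_r and centers μ_1,...,μ_r of Σ_k Σ_{y_j ∈ S_k} ‖y_j - μ_k‖² ≤ 2mr + 2m. -/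
/-!
Represent cluster `k` by an arbitrary member of community `k` and put all outliers into one
cluster. An inlier of community `k` then costs at most `2m / l_k` and an outlier at most `2`,
so community `k` contributes at most `l_k · 2m / l_k = 2m` and the `m` outliers at most `2m`.
-/

open Finset

theorem sum_le_sum_card_fiber_nsmul {ι κ M : Type*} [Fintype ι] [Fintype κ] [DecidableEq κ]
    [AddCommMonoid M] [PartialOrder M] [IsOrderedAddMonoid M]
    (φ : ι → κ) {g : ι → M} {f : κ → M} (h : ∀ j, g j ≤ f (φ j)) :
    ∑ j, g j ≤ ∑ k, #{j | φ j = k} • f k :=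
  calc ∑ j, g j ≤ ∑ j, f (φ j) := sum_le_sum fun j _ => h j
    _ = ∑ k, #{j | φ j = k} • f k := by
      rw [← sum_fiberwise univ φ]
      exact sum_congr rfl fun k _ => sum_eq_card_nsmul fun j hj => by rw [(mem_filter.1 hj).2]

theorem stmt3_general {N m r : ℕ} (hr : 0 < r)
    (φ : Fin N → Fin (r + 1)) (l : Fin r → ℕ)
    (y : Fin N → EuclideanSpace ℝ (Fin N))
    (hl : ∀ k : Fin r, l k = (Finset.univ.filter fun i => φ i = k.castSucc).card)
    (hlpos : ∀ k, 0 < l k)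
    (hm : (Finset.univ.filter fun i => φ i = Fin.last r).card = m)
    (hsame : ∀ i j (k : Fin r), φ i = k.castSucc → φ j = k.castSucc →
      ‖y i - y j‖ ^ 2 ≤ 2 * (m : ℝ) / (l k : ℝ))
    (hall : ∀ i j, ‖y i - y j‖ ^ 2 ≤ 2) :
    ∃ (c : Fin N → Fin r) (μc : Fin r → EuclideanSpace ℝ (Fin N)),
      ∑ j, ‖y j - μc (c j)‖ ^ 2 ≤ 2 * m * r + 2 * m := by
  have hrep : ∀ k : Fin r, ∃ i, φ i = k.castSucc := fun k => by
    simpa [hl k, card_pos, filter_nonempty_iff] using hlpos k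
  choose rep hrep using hrep
  let bound : Fin (r + 1) → ℝ := Fin.lastCases 2 fun k => 2 * m / l k
  refine ⟨fun j => Fin.lastCases ⟨0, hr⟩ id (φ j), fun k => y (rep k), ?_⟩
  calc _ ≤ ∑ k, #{j | φ j = k} • bound k := sum_le_sum_card_fiber_nsmul φ fun j => ?_
    _ = 2 * m * r + 2 * m := by
      have hcommunity (k : Fin r) : (l k : ℝ) * (2 * m / l k) = 2 * m :=
        mul_div_cancel₀ _ (by exact_mod_cast (hlpos k).ne')
      simp only [Fin.sum_univ_castSucc, bound, Fin.lastCases_castSucc, Fin.lastCases_last,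
        nsmul_eq_mul, ← hl, hm, hcommunity, sum_const, card_univ, Fintype.card_fin]
      ring
  obtain ⟨k, hk⟩ | hk := Fin.eq_castSucc_or_eq_last (φ j)
  · simpa [hk, bound] using hsame j (rep k) k hk (hrep k)
  · simpa [hk, bound] using hall j (rep ⟨0, hr⟩)

theorem stmt3 {N n m r : ℕ} (hN : N = n + m) (hr : 0 < r)
    (φ : Fin N → Fin (r + 1)) (l : Fin r → ℕ)
    (y : Fin N → EuclideanSpace ℝ (Fin N))
    (hunit : ∀ i, ‖y i‖ = 1) (hnonneg : ∀ i a, 0 ≤ y i a)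
    (hl : ∀ k : Fin r, l k = (Finset.univ.filter fun i => φ i = k.castSucc).card)
    (hlpos : ∀ k, 0 < l k)
    (hm : (Finset.univ.filter fun i => φ i = Fin.last r).card = m)
    (hsame : ∀ i j (k : Fin r), φ i = k.castSucc → φ j = k.castSucc →
      ‖y i - y j‖ ^ 2 ≤ 2 * (m : ℝ) / (l k : ℝ))
    (hall : ∀ i j, ‖y i - y j‖ ^ 2 ≤ 2) :
    ∃ (c : Fin N → Fin r) (μc : Fin r → EuclideanSpace ℝ (Fin N)),
      ∑ j, ‖y j - μc (c j)‖ ^ 2 ≤ 2 * m * r + 2 * m :=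
  stmt3_general hr φ l y hl hlpos hm hsame hall
end

section
/- Under the k-means setup with r communities among n inliers and m < n_min/(2r+4) outliers, every true community D_i (i = 1,...,r) constitutes more than 50% of some estimated cluster Ŝ_k; moreover the misclassification rate p/n among inliers satisfies p/n ≤ (2mr+2m)/((1 - m/n_min)n) ≤ (2r+3)m/n. -/
/-! Put `t = 1 - m / n_min`. Inliers of different communities are at squared distance at least
`2 t`, and `‖u - w‖² ≤ 2 (‖u - μ‖² + ‖w - μ‖²)`, so two of them sharing a cluster contribute at
least `t` to the k-means objective. Hence `p` disjoint such pairs cost at least `p t`, which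
bounds `p`. If no cluster had a majority of `D_i`, then in each cluster the `a` points of `D_i`,
the `b` other inliers and the `o` outliers satisfy `a ≤ b + o`; averaging over the `a b` cross
pairs shows the cluster costs at least `min a b * t ≥ (a - o) t`. Summing over clusters gives a
cost of at least `(l_i - m) t > 2 m r + 2 m`, contradicting the bound on the optimal value. -/

open Finset

theorem norm_sub_sq_le_two_mul_add {E : Type*} [SeminormedAddCommGroup E] (u v w : E) :
    ‖u - w‖ ^ 2 ≤ 2 * (‖u - v‖ ^ 2 + ‖w - v‖ ^ 2) := by
  have h : ‖u - w‖ ≤ ‖u - v‖ + ‖w - v‖ := by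
    simpa only [norm_sub_rev v w] using norm_sub_le_norm_sub_add_norm_sub u v w
  nlinarith [norm_nonneg (u - w), sq_nonneg (‖u - v‖ - ‖w - v‖)]

theorem le_norm_sub_sq_add_norm_sub_sq {E : Type*} [SeminormedAddCommGroup E] {u w : E} {t : ℝ}
    (h : 2 * t ≤ ‖u - w‖ ^ 2) (v : E) : t ≤ ‖u - v‖ ^ 2 + ‖w - v‖ ^ 2 := by
  linarith [norm_sub_sq_le_two_mul_add u v w]

theorem min_mul_le_add_of_mul_mul_le {a b x y t : ℝ} (ha : 0 ≤ a) (hb : 0 ≤ b)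
    (hx : 0 ≤ x) (hy : 0 ≤ y) (h : a * b * t ≤ b * x + a * y) : min a b * t ≤ x + y := by
  rcases le_total a b with hab | hab
  · rw [min_eq_left hab]
    rcases hb.eq_or_lt with rfl | hb
    · rw [le_antisymm hab ha, zero_mul]; linarith
    · nlinarith
  · rw [min_eq_right hab]
    rcases ha.eq_or_lt with rfl | ha
    · rw [le_antisymm hab hb, zero_mul]; linarith
    · nlinarith

theorem min_card_mul_le_sum_add_sum {ι : Type*} {f : ι → ℝ} {t : ℝ} (A B : Finset ι)
    (hf : ∀ j, 0 ≤ f j) (hpair : ∀ j ∈ A, ∀ j' ∈ B, t ≤ f j + f j') :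
    min (#A : ℝ) #B * t ≤ ∑ j ∈ A, f j + ∑ j ∈ B, f j := by
  refine min_mul_le_add_of_mul_mul_le (by positivity) (by positivity)
    (sum_nonneg fun j _ => hf j) (sum_nonneg fun j _ => hf j) ?_
  calc (#A : ℝ) * #B * t = ∑ j ∈ A, ∑ j' ∈ B, t := by simp [mul_assoc]
    _ ≤ ∑ j ∈ A, ∑ j' ∈ B, (f j + f j') :=
        sum_le_sum fun j hj => sum_le_sum fun j' hj' => hpair j hj j' hj'
    _ = #B * ∑ j ∈ A, f j + #A * ∑ j ∈ B, f j := by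
      simp only [sum_add_distrib, sum_const, nsmul_eq_mul, ← mul_sum]

theorem natCast_mul_le_sum_of_disjoint_pairs {ι : Type*} [Fintype ι] {f : ι → ℝ} {t : ℝ}
    (hf : ∀ j, 0 ≤ f j) {p : ℕ} (P : Fin p → ι × ι) (hne : ∀ a, (P a).1 ≠ (P a).2)
    (hdisj : ∀ a b, a ≠ b → (P a).1 ≠ (P b).1 ∧ (P a).1 ≠ (P b).2 ∧
      (P a).2 ≠ (P b).1 ∧ (P a).2 ≠ (P b).2)
    (hpair : ∀ a, t ≤ f (P a).1 + f (P a).2) :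
    p * t ≤ ∑ j, f j := by
  classical
  have hinj : Function.Injective (Sum.elim (fun a => (P a).1) (fun a => (P a).2)) := by
    refine Function.Injective.sumElim (fun a b h => ?_) (fun a b h => ?_) fun a b h => ?_
    · by_contra hab; exact (hdisj a b hab).1 h
    · by_contra hab; exact (hdisj a b hab).2.2.2 h
    · rcases eq_or_ne a b with rfl | hab
      · exact hne a h
      · exact (hdisj a b hab).2.1 h
  calc (p : ℝ) * t = ∑ a : Fin p, t := by simp
    _ ≤ ∑ a, (f (P a).1 + f (P a).2) := sum_le_sum fun a _ => hpair a
    _ = ∑ x, f (Sum.elim (fun a => (P a).1) (fun a => (P a).2) x) := by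
      simp [Fintype.sum_sum_type, sum_add_distrib]
    _ ≤ ∑ j, f j := by
      rw [← sum_image (hinj.injOn)]
      exact sum_le_univ_sum_of_nonneg hf

theorem card_sub_card_mul_le_sum_add_sum {ι : Type*} {f : ι → ℝ} {t : ℝ} {A B O : Finset ι}
    (hcard : #A ≤ #B + #O) (hf : ∀ j, 0 ≤ f j) (ht : 0 ≤ t)
    (hpair : ∀ j ∈ A, ∀ j' ∈ B, t ≤ f j + f j') :
    (#A - #O : ℝ) * t ≤ ∑ j ∈ A, f j + ∑ j ∈ B, f j := by
  have hmin : (#A - #O : ℝ) ≤ min (#A : ℝ) #B := by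
    have : (#A : ℝ) ≤ #B + #O := by exact_mod_cast hcard
    exact le_min (by linarith [(#O).cast_nonneg (α := ℝ)]) (by linarith)
  exact (mul_le_mul_of_nonneg_right hmin ht).trans (min_card_mul_le_sum_add_sum A B hf hpair)

theorem card_filter_eq_add_add {ι : Type*} [Fintype ι] [DecidableEq ι] (p : ι → Prop)
    [DecidablePred p] {I D : Finset ι} (hDI : D ⊆ I) :
    #{j | p j} = #{j ∈ D | p j} + #{j ∈ I \ D | p j} + #{j ∈ Iᶜ | p j} := by
  rw [← card_union_of_disjoint (disjoint_filter_filter disjoint_sdiff), ← filter_union,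
    union_sdiff_of_subset hDI,
    ← card_union_of_disjoint (disjoint_filter_filter disjoint_compl_right), ← filter_union,
    union_compl]

theorem exists_two_mul_card_filter_gt {ι κ : Type*} [Fintype ι] [DecidableEq ι] [Fintype κ]
    [DecidableEq κ] {f : ι → ℝ} {t : ℝ} (c : ι → κ) (hf : ∀ j, 0 ≤ f j) (ht : 0 ≤ t)
    {I D : Finset ι} (hDI : D ⊆ I)
    (hsep : ∀ j ∈ D, ∀ j' ∈ I \ D, c j = c j' → t ≤ f j + f j')
    (hcost : ∑ j, f j < (#D - #Iᶜ) * t) :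
    ∃ k, #{j | c j = k} < 2 * #{j ∈ D | c j = k} := by
  by_contra! hmaj
  refine hcost.not_ge ?_
  have hcluster : ∀ k, (#{j ∈ D | c j = k} - #{j ∈ Iᶜ | c j = k} : ℝ) * t ≤
      ∑ j ∈ D with c j = k, f j + ∑ j ∈ I \ D with c j = k, f j := by
    intro k
    refine card_sub_card_mul_le_sum_add_sum ?_ hf ht fun j hj j' hj' => ?_
    · have := card_filter_eq_add_add (c · = k) hDI
      have := hmaj k
      omega
    · rw [mem_filter] at hj hj'
      exact hsep j hj.1 j' hj'.1 (hj.2.trans hj'.2.symm)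
  calc (#D - #Iᶜ : ℝ) * t
      = ∑ k, (#{j ∈ D | c j = k} - #{j ∈ Iᶜ | c j = k} : ℝ) * t := by
        rw [← sum_mul, sum_sub_distrib, card_eq_sum_card_fiberwise (fun j _ => mem_univ (c j)),
          card_eq_sum_card_fiberwise (s := Iᶜ) (fun j _ => mem_univ (c j)), Nat.cast_sum,
          Nat.cast_sum]
    _ ≤ ∑ k, (∑ j ∈ D with c j = k, f j + ∑ j ∈ I \ D with c j = k, f j) :=
        sum_le_sum fun k _ => hcluster k
    _ = ∑ j ∈ I, f j := by
        rw [sum_add_distrib, sum_fiberwise, sum_fiberwise, add_comm, sum_sdiff hDI]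
    _ ≤ ∑ j, f j := sum_le_univ_sum_of_nonneg hf

theorem two_mul_mul_add_lt_sub_mul {m r n l : ℝ} (hr : 0 ≤ r) (hn : 0 < n)
    (hx : m / n * (2 * r + 4) < 1) (hl : n ≤ l) :
    2 * m * r + 2 * m < (l - m) * (1 - m / n) := by
  have hmx : m = m / n * n := (div_mul_cancel₀ m hn.ne').symm
  set x := m / n
  have hx1 : 0 ≤ 1 - x := by nlinarith
  calc 2 * m * r + 2 * m = n * ((2 * r + 2) * x) := by rw [hmx]; ring
    _ < n * (1 - 2 * x) := by nlinarith
    _ ≤ n * (1 - x) ^ 2 := by nlinarith [sq_nonneg x]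
    _ = (n - m) * (1 - x) := by rw [hmx]; ring
    _ ≤ (l - m) * (1 - x) := by gcongr

theorem two_mul_mul_add_le_mul_sub {m r n : ℝ} (hm0 : 0 ≤ m) (hn : 0 < n)
    (hx : m / n * (2 * r + 4) < 1) :
    2 * m * r + 2 * m ≤ (2 * r + 3) * m * (1 - m / n) := by
  nlinarith [mul_nonneg hm0 (div_nonneg hm0 hn.le)]

theorem stmt19_general {N n m r nmin : ℕ} (hN : N = n + m)
    (ψ : Fin N → Fin r) (l : Fin r → ℕ)
    (hl : ∀ k, l k = (Finset.univ.filter fun i : Fin N => (i : ℕ) < n ∧ ψ i = k).card)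
    (hnmin : ∀ k, nmin ≤ l k)
    (hm : (m : ℝ) < (nmin : ℝ) / (2 * r + 4))
    (y : Fin N → EuclideanSpace ℝ (Fin N))
    (hdiff : ∀ i j : Fin N, (i : ℕ) < n → (j : ℕ) < n → ψ i ≠ ψ j →
      2 - 2 * (m : ℝ) / (nmin : ℝ) ≤ ‖y i - y j‖ ^ 2)
    (c : Fin N → Fin r) (μc : Fin r → EuclideanSpace ℝ (Fin N))
    (hopt : ∑ j, ‖y j - μc (c j)‖ ^ 2 ≤ 2 * m * r + 2 * m) :
    (∀ i : Fin r, ∃ k : Fin r,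
      (Finset.univ.filter fun j => c j = k).card <
        2 * (Finset.univ.filter fun j : Fin N =>
          (j : ℕ) < n ∧ ψ j = i ∧ c j = k).card) ∧
    (∀ (p : ℕ) (P : Fin p → Fin N × Fin N),
      (∀ a, ((P a).1 : ℕ) < n ∧ ((P a).2 : ℕ) < n) →
      (∀ a, ψ (P a).1 ≠ ψ (P a).2) →
      (∀ a, c (P a).1 = c (P a).2) →
      (∀ a, (P a).1 ≠ (P a).2) →
      (∀ a b, a ≠ b → (P a).1 ≠ (P b).1 ∧ (P a).1 ≠ (P b).2 ∧
        (P a).2 ≠ (P b).1 ∧ (P a).2 ≠ (P b).2) →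
      ((p : ℝ) / n ≤ (2 * m * r + 2 * m) / ((1 - (m : ℝ) / nmin) * n) ∧
        (2 * m * r + 2 * m) / ((1 - (m : ℝ) / nmin) * n) ≤ (2 * r + 3) * m / n)) := by
  have hm0 : (0 : ℝ) ≤ m := m.cast_nonneg
  have hnmin0 : (0 : ℝ) < nmin := (div_pos_iff_of_pos_right (by positivity)).1 (hm0.trans_lt hm)
  have hx : (m : ℝ) / nmin * (2 * r + 4) < 1 := by
    rwa [div_mul_eq_mul_div, div_lt_one hnmin0, ← lt_div_iff₀ (by positivity)]
  set t : ℝ := 1 - (m : ℝ) / nmin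
  have ht : 0 < t := by nlinarith [div_nonneg hm0 hnmin0.le]
  set cost : Fin N → ℝ := fun j => ‖y j - μc (c j)‖ ^ 2
  have hcost : ∀ j, 0 ≤ cost j := fun j => sq_nonneg _
  have hsep : ∀ j j' : Fin N, (j : ℕ) < n → (j' : ℕ) < n → ψ j ≠ ψ j' → c j = c j' →
      t ≤ cost j + cost j' := fun j j' hj hj' hψ hc => by
    have h2t : 2 * t ≤ ‖y j - y j'‖ ^ 2 := by
      simpa only [t, mul_one_sub, mul_div_assoc] using hdiff j j' hj hj' hψ
    simpa only [cost, ← hc] using le_norm_sub_sq_add_norm_sub_sq h2t (μc (c j))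
  refine ⟨fun i => ?_, fun p P hP hψ hc hne hdisj => ?_⟩
  · have hinliers : #(univ.filter fun j : Fin N => (j : ℕ) < n)ᶜ = m := by
      rw [card_compl, Fin.card_filter_val_lt, Fintype.card_fin]
      omega
    have hmajority := exists_two_mul_card_filter_gt c hcost ht.le
      (I := {j : Fin N | (j : ℕ) < n}) (D := {j | (j : ℕ) < n ∧ ψ j = i})
      (fun j => by simp +contextual)
      (fun j hj j' hj' => by
        simp only [mem_filter, mem_sdiff, mem_univ, true_and, not_and] at hj hj'
        exact hsep j j' hj.1 hj'.1 fun h => hj'.2 hj'.1 (h.symm.trans hj.2))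
      (by
        rw [← hl, hinliers]
        exact hopt.trans_lt (two_mul_mul_add_lt_sub_mul r.cast_nonneg hnmin0 hx (mod_cast hnmin i)))
    simpa only [filter_filter, and_assoc] using hmajority
  · have hp : p * t ≤ 2 * m * r + 2 * m :=
      (natCast_mul_le_sum_of_disjoint_pairs hcost P hne hdisj fun a =>
        hsep _ _ (hP a).1 (hP a).2 (hψ a) (hc a)).trans hopt
    rw [← div_div]
    exact ⟨div_le_div_of_nonneg_right ((le_div_iff₀ ht).2 hp) n.cast_nonneg,
      div_le_div_of_nonneg_right ((div_le_iff₀ ht).2 (two_mul_mul_add_le_mul_sub hm0 hnmin0 hx))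
        n.cast_nonneg⟩

theorem stmt19 {N n m r nmin : ℕ} (hN : N = n + m) (hr : 0 < r)
    (ψ : Fin N → Fin r) (l : Fin r → ℕ)
    (hl : ∀ k, l k = (Finset.univ.filter fun i : Fin N => (i : ℕ) < n ∧ ψ i = k).card)
    (hnmin : ∀ k, nmin ≤ l k) (hnminpos : 0 < nmin)
    (hm : (m : ℝ) < (nmin : ℝ) / (2 * r + 4))
    (y : Fin N → EuclideanSpace ℝ (Fin N))
    (hunit : ∀ i, ‖y i‖ = 1) (hnonneg : ∀ i a, 0 ≤ y i a)
    (hsame : ∀ i j : Fin N, (i : ℕ) < n → (j : ℕ) < n → ψ i = ψ j →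
      ‖y i - y j‖ ^ 2 ≤ 2 * (m : ℝ) / (l (ψ i) : ℝ))
    (hdiff : ∀ i j : Fin N, (i : ℕ) < n → (j : ℕ) < n → ψ i ≠ ψ j →
      2 - 2 * (m : ℝ) / (nmin : ℝ) ≤ ‖y i - y j‖ ^ 2)
    (hall : ∀ i j, ‖y i - y j‖ ^ 2 ≤ 2)
    (c : Fin N → Fin r) (μc : Fin r → EuclideanSpace ℝ (Fin N))
    (hmin : ∀ (c' : Fin N → Fin r) (μ' : Fin r → EuclideanSpace ℝ (Fin N)),
      ∑ j, ‖y j - μc (c j)‖ ^ 2 ≤ ∑ j, ‖y j - μ' (c' j)‖ ^ 2)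
    (hcentroid : ∀ k : Fin r, μc k =
      ((Finset.univ.filter fun j => c j = k).card : ℝ)⁻¹ •
        ∑ j ∈ Finset.univ.filter fun j => c j = k, y j)
    (hopt : ∑ j, ‖y j - μc (c j)‖ ^ 2 ≤ 2 * m * r + 2 * m) :
    (∀ i : Fin r, ∃ k : Fin r,
      (Finset.univ.filter fun j => c j = k).card <
        2 * (Finset.univ.filter fun j : Fin N =>
          (j : ℕ) < n ∧ ψ j = i ∧ c j = k).card) ∧
    (∀ (p : ℕ) (P : Fin p → Fin N × Fin N),
      (∀ a, ((P a).1 : ℕ) < n ∧ ((P a).2 : ℕ) < n) →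
      (∀ a, ψ (P a).1 ≠ ψ (P a).2) →
      (∀ a, c (P a).1 = c (P a).2) →
      (∀ a, (P a).1 ≠ (P a).2) →
      (∀ a b, a ≠ b → (P a).1 ≠ (P b).1 ∧ (P a).1 ≠ (P b).2 ∧
        (P a).2 ≠ (P b).1 ∧ (P a).2 ≠ (P b).2) →
      ((p : ℝ) / n ≤ (2 * m * r + 2 * m) / ((1 - (m : ℝ) / nmin) * n) ∧
        (2 * m * r + 2 * m) / ((1 - (m : ℝ) / nmin) * n) ≤ (2 * r + 3) * m / n)) :=
  stmt19_general hN ψ l hl hnmin hm y hdiff c μc hopt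
end
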